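/- arXiv:math/0406107 — 13 statements merged into one kernel-verified Lean document; each statement's English description precedes it below -/
import Mathlib

section
/- Let H be a Hilbert space, f : [a,b] → H Bochner integrable, K ≥ 1, and e a unit vector in H with ‖f(t)‖ ≤ K · Re⟨f(t), e⟩ for a.e. t. Then equality ∫ₐᵇ ‖f(t)‖ dt = K‖∫ₐᵇ f(t) dt‖ holds if and only if ∫ₐᵇ f(t) dt = (1/K)(∫ₐᵇ ‖f(t)‖ dt) · e. -/
/-!
Integrating `‖f‖ ≤ K re⟪f, e⟫` gives `∫ ‖f‖ ≤ K re⟪∫ f, e⟫ ≤ K ‖∫ f‖`. Hence the equality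
`∫ ‖f‖ = K ‖∫ f‖` forces `‖∫ f‖ ≤ re⟪∫ f, e⟫`, which is the equality case of Cauchy–Schwarz
and makes `∫ f` the nonnegative multiple `‖∫ f‖ • e` of the unit vector `e`.
-/

open MeasureTheory RCLike
open scoped InnerProductSpace

section InnerProductSpace

variable {𝕜 E : Type*} [RCLike 𝕜] [NormedAddCommGroup E] [InnerProductSpace 𝕜 E]

theorem eq_norm_smul_of_norm_le_re_inner {x e : E} (he : ‖e‖ = 1) (h : ‖x‖ ≤ re ⟪x, e⟫_𝕜) :
    x = (‖x‖ : 𝕜) • e := by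
  have hre : re ⟪x, e⟫_𝕜 = ‖x‖ :=
    le_antisymm (by simpa [he] using re_inner_le_norm (𝕜 := 𝕜) x e) h
  refine eq_of_norm_le_re_inner_eq_norm_sq (𝕜 := 𝕜) (le_of_eq ?_) ?_
  · simp [norm_smul, he]
  · rw [inner_smul_right, re_ofReal_mul, hre, norm_smul, he]
    simp [sq]

theorem integral_norm_le_mul_re_inner_integral [NormedSpace ℝ E] [CompleteSpace E]
    {α : Type*} [MeasurableSpace α] {μ : Measure α} {f : α → E} (hf : Integrable f μ)
    {K : ℝ} {e : E} (h : ∀ᵐ t ∂μ, ‖f t‖ ≤ K * re ⟪f t, e⟫_𝕜) :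
    ∫ t, ‖f t‖ ∂μ ≤ K * re ⟪∫ t, f t ∂μ, e⟫_𝕜 := by
  have hinner : Integrable (fun t ↦ ⟪e, f t⟫_𝕜) μ := hf.const_inner e
  calc ∫ t, ‖f t‖ ∂μ ≤ ∫ t, K * re ⟪e, f t⟫_𝕜 ∂μ := by
        refine integral_mono_ae hf.norm (hinner.re.const_mul K) ?_
        filter_upwards [h] with t ht
        rwa [inner_re_symm]
    _ = K * re ⟪∫ t, f t ∂μ, e⟫_𝕜 := by
        rw [integral_const_mul, integral_re hinner, integral_inner hf, inner_re_symm]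

end InnerProductSpace

theorem stmt_1 {𝕜 H : Type*} [RCLike 𝕜] [NormedAddCommGroup H] [InnerProductSpace 𝕜 H]
    [NormedSpace ℝ H] [IsScalarTower ℝ 𝕜 H] [CompleteSpace H]
    {a b : ℝ} {f : ℝ → H} (hf : IntegrableOn f (Set.Icc a b))
    {K : ℝ} (hK : 1 ≤ K) {e : H} (he : ‖e‖ = 1)
    (h : ∀ᵐ t ∂(volume.restrict (Set.Icc a b)),
      ‖f t‖ ≤ K * RCLike.re (inner 𝕜 (f t) e : 𝕜)) :
    (∫ t in Set.Icc a b, ‖f t‖) = K * ‖∫ t in Set.Icc a b, f t‖ ↔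
      (∫ t in Set.Icc a b, f t) = ((1 / K) * ∫ t in Set.Icc a b, ‖f t‖) • e := by
  set I := ∫ t in Set.Icc a b, f t
  set N := ∫ t in Set.Icc a b, ‖f t‖
  have hK0 : 0 < K := one_pos.trans_le hK
  have hN : N ≤ K * re ⟪I, e⟫_𝕜 := integral_norm_le_mul_re_inner_integral hf h
  constructor
  · intro hNI
    have hI : ‖I‖ ≤ re ⟪I, e⟫_𝕜 := le_of_mul_le_mul_left (hNI ▸ hN) hK0
    calc I = (‖I‖ : 𝕜) • e := eq_norm_smul_of_norm_le_re_inner he hI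
      _ = ‖I‖ • e := (real_smul_eq_coe_smul _ _).symm
      _ = ((1 / K) * N) • e := by rw [hNI]; field_simp
  · intro hI
    have hN0 : 0 ≤ N := integral_nonneg fun t ↦ norm_nonneg _
    rw [hI, norm_smul, he, mul_one, Real.norm_of_nonneg (by positivity)]
    field_simp
end

section
/- Let e be a unit vector in a Hilbert space H, ρ ∈ (0,1), and f : [a,b] → H Bochner integrable with ‖f(t) − e‖ ≤ ρ for a.e. t ∈ [a,b]. Then √(1 − ρ²) · ∫ₐᵇ ‖f(t)‖ dt ≤ ‖∫ₐᵇ f(t) dt‖. -/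
open MeasureTheory
open scoped InnerProductSpace

theorem stmt_2 {𝕜 H : Type*} [RCLike 𝕜] [NormedAddCommGroup H] [InnerProductSpace 𝕜 H]
    [NormedSpace ℝ H] [IsScalarTower ℝ 𝕜 H] [CompleteSpace H]
    {a b : ℝ} {f : ℝ → H} (hf : IntegrableOn f (Set.Icc a b))
    {ρ : ℝ} (hρ : ρ ∈ Set.Ioo (0 : ℝ) 1) {e : H} (he : ‖e‖ = 1)
    (h : ∀ᵐ t ∂(volume.restrict (Set.Icc a b)), ‖f t - e‖ ≤ ρ) :
    Real.sqrt (1 - ρ ^ 2) * ∫ t in Set.Icc a b, ‖f t‖ ≤ ‖∫ t in Set.Icc a b, f t‖ := by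
  set c : ℝ := Real.sqrt (1 - ρ ^ 2) with hc
  have hc2 : c ^ 2 = 1 - ρ ^ 2 := by
    rw [hc, Real.sq_sqrt]
    nlinarith [hρ.1, hρ.2]
  have hcnn : 0 ≤ c := Real.sqrt_nonneg _
  -- pointwise bound
  have key : ∀ x : H, ‖x - e‖ ≤ ρ → c * ‖x‖ ≤ RCLike.re (⟪e, x⟫_𝕜) := by
    intro x hx
    have hsq : ‖x - e‖ ^ 2 ≤ ρ ^ 2 := by
      have := norm_nonneg (x - e)
      nlinarith
    have hexp : ‖x - e‖ ^ 2 = ‖x‖ ^ 2 - 2 * RCLike.re (⟪x, e⟫_𝕜) + ‖e‖ ^ 2 :=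
      @norm_sub_sq 𝕜 H _ _ _ x e
    have hre : RCLike.re (⟪x, e⟫_𝕜) = RCLike.re (⟪e, x⟫_𝕜) := by
      rw [← inner_conj_symm e x, RCLike.conj_re]
    rw [hre, he] at hexp
    nlinarith [sq_nonneg (c - ‖x‖)]
  -- integrability facts
  have hint : Integrable (fun t => (⟪e, f t⟫_𝕜)) (volume.restrict (Set.Icc a b)) :=
    hf.const_inner e
  have hintre : Integrable (fun t => RCLike.re (⟪e, f t⟫_𝕜))
      (volume.restrict (Set.Icc a b)) := hint.re
  have hnorm : Integrable (fun t => ‖f t‖) (volume.restrict (Set.Icc a b)) := hf.norm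
  have step1 : c * ∫ t in Set.Icc a b, ‖f t‖
      ≤ ∫ t in Set.Icc a b, RCLike.re (⟪e, f t⟫_𝕜) := by
    rw [← integral_const_mul]
    refine integral_mono_ae (hnorm.const_mul c) hintre ?_
    filter_upwards [h] with t ht
    exact key (f t) ht
  have step2 : (∫ t in Set.Icc a b, RCLike.re (⟪e, f t⟫_𝕜))
      = RCLike.re (⟪e, ∫ t in Set.Icc a b, f t⟫_𝕜) := by
    rw [← integral_inner hf e, integral_re hint]
  have step3 : RCLike.re (⟪e, ∫ t in Set.Icc a b, f t⟫_𝕜)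
      ≤ ‖∫ t in Set.Icc a b, f t‖ := by
    have := re_inner_le_norm (𝕜 := 𝕜) e (∫ t in Set.Icc a b, f t)
    rwa [he, one_mul] at this
  calc c * ∫ t in Set.Icc a b, ‖f t‖ ≤ _ := step1
    _ = _ := step2
    _ ≤ _ := step3
end

section
/- Let H be a Hilbert space, e ∈ H with ‖e‖ = 1, ρ ∈ (0,1), and x ∈ H with ‖x − e‖ ≤ ρ. Then √(1 − ρ²) · ‖x‖ ≤ Re⟨x, e⟩. -/
/-! By the polarization identity `2 Re⟪x, e⟫ = ‖x‖² + ‖e‖² - ‖x - e‖² ≥ ‖x‖² + (1 - ρ²)`,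
and the AM–GM inequality bounds the right-hand side below by `2 √(1 - ρ²) ‖x‖`. -/

open RCLike

theorem sqrt_mul_norm_le_re_inner {𝕜 H : Type*} [RCLike 𝕜] [NormedAddCommGroup H]
    [InnerProductSpace 𝕜 H] {x e : H} {c : ℝ} (hc₀ : 0 ≤ c)
    (hc : c ≤ ‖e‖ ^ 2 - ‖x - e‖ ^ 2) :
    Real.sqrt c * ‖x‖ ≤ re (inner 𝕜 x e : 𝕜) := by
  have h_polar := @norm_sub_sq 𝕜 _ _ _ _ x e
  have h_amgm := two_mul_le_add_sq (Real.sqrt c) ‖x‖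
  rw [Real.sq_sqrt hc₀] at h_amgm
  linarith

theorem stmt_3 {𝕜 H : Type*} [RCLike 𝕜] [NormedAddCommGroup H] [InnerProductSpace 𝕜 H]
    {ρ : ℝ} (hρ : ρ ∈ Set.Ioo (0 : ℝ) 1) {e : H} (he : ‖e‖ = 1)
    {x : H} (hx : ‖x - e‖ ≤ ρ) :
    Real.sqrt (1 - ρ ^ 2) * ‖x‖ ≤ RCLike.re (inner 𝕜 x e : 𝕜) := by
  obtain ⟨hρ₀, hρ₁⟩ := hρ
  have hx_sq : ‖x - e‖ ^ 2 ≤ ρ ^ 2 := pow_le_pow_left₀ (norm_nonneg _) hx 2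
  refine sqrt_mul_norm_le_re_inner (by nlinarith) ?_
  rw [he]
  linarith
end

section
/- Let e be a unit vector in a Hilbert space H and M ≥ m > 0. If f : [a,b] → H is Bochner integrable and Re⟨M e − f(t), f(t) − m e⟩ ≥ 0 for a.e. t ∈ [a,b], then (2√(mM)/(M+m)) · ∫ₐᵇ ‖f(t)‖ dt ≤ ‖∫ₐᵇ f(t) dt‖. -/
/-!
Expanding the hypothesis gives, pointwise, `‖f t‖² + m M ≤ (M + m) Re ⟪e, f t⟫`, and AM-GM bounds the
left side below by `2 √(m M) ‖f t‖`. Integrating, `2 √(m M) ∫ ‖f‖ ≤ (M + m) Re ⟪e, ∫ f⟫`, and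
Cauchy–Schwarz with `‖e‖ = 1` bounds `Re ⟪e, ∫ f⟫` by `‖∫ f‖`.
-/

open MeasureTheory
open scoped InnerProductSpace

section InnerProductSpace

variable {𝕜 E : Type*} [RCLike 𝕜] [NormedAddCommGroup E] [InnerProductSpace 𝕜 E]

theorem re_inner_smul_sub_sub_smul (M m : ℝ) (e x : E) :
    RCLike.re ⟪(M : 𝕜) • e - x, x - (m : 𝕜) • e⟫_𝕜 =
      (M + m) * RCLike.re ⟪e, x⟫_𝕜 - ‖x‖ ^ 2 - m * M * ‖e‖ ^ 2 := by
  have hsymm : RCLike.re ⟪x, e⟫_𝕜 = RCLike.re ⟪e, x⟫_𝕜 := inner_re_symm _ _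
  simp only [inner_sub_left, inner_sub_right, inner_smul_left, inner_smul_right,
    map_sub, RCLike.conj_ofReal, RCLike.re_ofReal_mul, inner_self_eq_norm_sq]
  rw [hsymm]
  ring

theorem two_sqrt_mul_mul_norm_le_of_re_inner_nonneg {m M : ℝ} (hm : 0 ≤ m) (hM : 0 ≤ M)
    {e x : E} (he : ‖e‖ = 1) (h : 0 ≤ RCLike.re ⟪(M : 𝕜) • e - x, x - (m : 𝕜) • e⟫_𝕜) :
    2 * Real.sqrt (m * M) * ‖x‖ ≤ (M + m) * RCLike.re ⟪e, x⟫_𝕜 := by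
  rw [re_inner_smul_sub_sub_smul, he] at h
  have hsq : Real.sqrt (m * M) ^ 2 = m * M := Real.sq_sqrt (mul_nonneg hm hM)
  nlinarith [two_mul_le_add_sq (Real.sqrt (m * M)) ‖x‖]

variable [NormedSpace ℝ E] [CompleteSpace E] {α : Type*} [MeasurableSpace α] {μ : Measure α}

theorem two_sqrt_mul_mul_integral_norm_le {f : α → E} (hf : Integrable f μ) {m M : ℝ}
    (hm : 0 ≤ m) (hM : 0 ≤ M) {e : E} (he : ‖e‖ = 1)
    (h : ∀ᵐ t ∂μ, 0 ≤ RCLike.re ⟪(M : 𝕜) • e - f t, f t - (m : 𝕜) • e⟫_𝕜) :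
    2 * Real.sqrt (m * M) * ∫ t, ‖f t‖ ∂μ ≤ (M + m) * RCLike.re ⟪e, ∫ t, f t ∂μ⟫_𝕜 := by
  have hinner : Integrable (fun t ↦ ⟪e, f t⟫_𝕜) μ := hf.const_inner e
  rw [← integral_inner hf, ← integral_re hinner, ← integral_const_mul, ← integral_const_mul]
  exact integral_mono_ae (hf.norm.const_mul _) (hinner.re.const_mul _)
    (h.mono fun t ↦ two_sqrt_mul_mul_norm_le_of_re_inner_nonneg hm hM he)

end InnerProductSpace

theorem stmt_4_general {𝕜 H : Type*} [RCLike 𝕜] [NormedAddCommGroup H] [InnerProductSpace 𝕜 H]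
    [NormedSpace ℝ H] [CompleteSpace H]
    {a b : ℝ} {f : ℝ → H} (hf : IntegrableOn f (Set.Icc a b))
    {m M : ℝ} (hm : 0 < m) (hmM : m ≤ M) {e : H} (he : ‖e‖ = 1)
    (h : ∀ᵐ t ∂(volume.restrict (Set.Icc a b)),
      0 ≤ RCLike.re (inner 𝕜 ((M : 𝕜) • e - f t) (f t - (m : 𝕜) • e) : 𝕜)) :
    (2 * Real.sqrt (m * M) / (M + m)) * ∫ t in Set.Icc a b, ‖f t‖ ≤
      ‖∫ t in Set.Icc a b, f t‖ := by
  have hM : 0 < M := hm.trans_le hmM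
  have hsum : 0 < M + m := add_pos hM hm
  have hcs : RCLike.re (inner 𝕜 e (∫ t in Set.Icc a b, f t)) ≤ ‖∫ t in Set.Icc a b, f t‖ := by
    simpa [he] using re_inner_le_norm (𝕜 := 𝕜) e (∫ t in Set.Icc a b, f t)
  rw [div_mul_eq_mul_div, div_le_iff₀ hsum]
  calc 2 * Real.sqrt (m * M) * ∫ t in Set.Icc a b, ‖f t‖
      ≤ (M + m) * RCLike.re (inner 𝕜 e (∫ t in Set.Icc a b, f t)) :=
        two_sqrt_mul_mul_integral_norm_le hf hm.le hM.le he h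
    _ ≤ (M + m) * ‖∫ t in Set.Icc a b, f t‖ := by gcongr
    _ = ‖∫ t in Set.Icc a b, f t‖ * (M + m) := mul_comm _ _

theorem stmt_4 {𝕜 H : Type*} [RCLike 𝕜] [NormedAddCommGroup H] [InnerProductSpace 𝕜 H]
    [NormedSpace ℝ H] [IsScalarTower ℝ 𝕜 H] [CompleteSpace H]
    {a b : ℝ} {f : ℝ → H} (hf : IntegrableOn f (Set.Icc a b))
    {m M : ℝ} (hm : 0 < m) (hmM : m ≤ M) {e : H} (he : ‖e‖ = 1)
    (h : ∀ᵐ t ∂(volume.restrict (Set.Icc a b)),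
      0 ≤ RCLike.re (inner 𝕜 ((M : 𝕜) • e - f t) (f t - (m : 𝕜) • e) : 𝕜)) :
    (2 * Real.sqrt (m * M) / (M + m)) * ∫ t in Set.Icc a b, ‖f t‖ ≤
      ‖∫ t in Set.Icc a b, f t‖ :=
  stmt_4_general hf hm hmM he h
end

section
/- Let H be a Hilbert space, x ∈ H, e ∈ H a unit vector, and M ≥ m > 0. If Re⟨M e − x, x − m e⟩ ≥ 0, then (2√(mM)/(M+m)) · ‖x‖ ≤ Re⟨x, e⟩. -/
/-! Expanding the hypothesis gives `‖x‖² + mM ≤ (M + m) Re⟪x, e⟫`, and AM–GM bounds the left side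
below by `2√(mM) ‖x‖`. -/

theorem re_inner_ofReal_smul_sub_sub_ofReal_smul {𝕜 H : Type*} [RCLike 𝕜] [NormedAddCommGroup H]
    [InnerProductSpace 𝕜 H] (a b : ℝ) (e x : H) :
    RCLike.re (inner 𝕜 ((a : 𝕜) • e - x) (x - (b : 𝕜) • e) : 𝕜)
      = (a + b) * RCLike.re (inner 𝕜 x e : 𝕜) - ‖x‖ ^ 2 - a * b * ‖e‖ ^ 2 := by
  simp only [inner_sub_left, inner_sub_right, inner_smul_left, inner_smul_right,
    RCLike.conj_ofReal, map_sub, RCLike.mul_re, RCLike.ofReal_re, RCLike.ofReal_im,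
    inner_self_eq_norm_sq, inner_re_symm (𝕜 := 𝕜) e x]
  ring

theorem two_mul_sqrt_mul_le_sq_add {c : ℝ} (hc : 0 ≤ c) (t : ℝ) :
    2 * Real.sqrt c * t ≤ t ^ 2 + c := by
  nlinarith [sq_nonneg (t - Real.sqrt c), Real.sq_sqrt hc]

theorem stmt_7 {𝕜 H : Type*} [RCLike 𝕜] [NormedAddCommGroup H] [InnerProductSpace 𝕜 H]
    {m M : ℝ} (hm : 0 < m) (hmM : m ≤ M) {e : H} (he : ‖e‖ = 1) {x : H}
    (h : 0 ≤ RCLike.re (inner 𝕜 ((M : 𝕜) • e - x) (x - (m : 𝕜) • e) : 𝕜)) :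
    (2 * Real.sqrt (m * M) / (M + m)) * ‖x‖ ≤ RCLike.re (inner 𝕜 x e : 𝕜) := by
  rw [re_inner_ofReal_smul_sub_sub_ofReal_smul, he] at h
  have hsum : 0 < M + m := by linarith
  have hprod : 0 ≤ m * M := mul_nonneg hm.le (hm.trans_le hmM).le
  rw [div_mul_eq_mul_div, div_le_iff₀ hsum]
  calc 2 * Real.sqrt (m * M) * ‖x‖ ≤ ‖x‖ ^ 2 + m * M := two_mul_sqrt_mul_le_sq_add hprod _
    _ ≤ RCLike.re (inner 𝕜 x e : 𝕜) * (M + m) := by linarith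
end

section
/- Let {e₁, …, eₙ} be an orthonormal family in a Hilbert space H, let k₁, …, kₙ ≥ 0, and let f : [a,b] → H be Bochner integrable, such that kᵢ‖f(t)‖ ≤ Re⟨f(t), eᵢ⟩ for each i ∈ {1,…,n} and a.e. t ∈ [a,b]. Then (∑ᵢ₌₁ⁿ kᵢ²)^{1/2} · ∫ₐᵇ ‖f(t)‖ dt ≤ ‖∫ₐᵇ f(t) dt‖. -/
/-! Integrating the pointwise bound gives `kᵢ ∫ ‖f‖ ≤ Re ⟪∫ f, eᵢ⟫` for each `i`, since the
functional `x ↦ Re ⟪x, eᵢ⟫` commutes with the Bochner integral. Squaring and summing, Bessel's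
inequality for the orthonormal family `e` bounds `(∑ kᵢ²) (∫ ‖f‖)²` by `‖∫ f‖²`. -/

open MeasureTheory

section

variable {𝕜 H : Type*} [RCLike 𝕜] [NormedAddCommGroup H] [InnerProductSpace 𝕜 H]

theorem mul_integral_norm_le_re_inner_integral [NormedSpace ℝ H] [CompleteSpace H]
    {α : Type*} [MeasurableSpace α] {μ : Measure α} {f : α → H} (hf : Integrable f μ)
    {c : ℝ} {v : H} (h : ∀ᵐ t ∂μ, c * ‖f t‖ ≤ RCLike.re (inner 𝕜 (f t) v : 𝕜)) :
    c * ∫ t, ‖f t‖ ∂μ ≤ RCLike.re (inner 𝕜 (∫ t, f t ∂μ) v : 𝕜) := by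
  have h' : ∀ᵐ t ∂μ, c * ‖f t‖ ≤ RCLike.re (inner 𝕜 v (f t) : 𝕜) := by
    filter_upwards [h] with t ht
    rwa [inner_re_symm]
  calc c * ∫ t, ‖f t‖ ∂μ = ∫ t, c * ‖f t‖ ∂μ := (integral_const_mul c _).symm
    _ ≤ ∫ t, RCLike.re (inner 𝕜 v (f t) : 𝕜) ∂μ :=
      integral_mono_ae (hf.norm.const_mul c) (hf.const_inner v).re h'
    _ = RCLike.re (inner 𝕜 (∫ t, f t ∂μ) v : 𝕜) := by
      rw [integral_re (hf.const_inner v), integral_inner hf, inner_re_symm]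

theorem Orthonormal.sqrt_sum_sq_le_norm {ι : Type*} [Fintype ι] {e : ι → H}
    (he : Orthonormal 𝕜 e) {x : H} {c : ι → ℝ} (hc : ∀ i, 0 ≤ c i)
    (h : ∀ i, c i ≤ RCLike.re (inner 𝕜 x (e i) : 𝕜)) :
    Real.sqrt (∑ i, c i ^ 2) ≤ ‖x‖ := by
  have hc_le : ∀ i, c i ≤ ‖(inner 𝕜 (e i) x : 𝕜)‖ := fun i =>
    (h i).trans ((RCLike.re_le_norm _).trans (norm_inner_symm x (e i)).le)
  refine Real.sqrt_le_iff.mpr ⟨norm_nonneg x, ?_⟩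
  calc ∑ i, c i ^ 2 ≤ ∑ i, ‖(inner 𝕜 (e i) x : 𝕜)‖ ^ 2 :=
        Finset.sum_le_sum fun i _ => pow_le_pow_left₀ (hc i) (hc_le i) 2
    _ ≤ ‖x‖ ^ 2 := he.sum_inner_products_le x

end

theorem stmt_8_general {𝕜 H : Type*} [RCLike 𝕜] [NormedAddCommGroup H] [InnerProductSpace 𝕜 H]
    [NormedSpace ℝ H] [CompleteSpace H]
    {a b : ℝ} {f : ℝ → H} (hf : IntegrableOn f (Set.Icc a b))
    {n : ℕ} {e : Fin n → H} (he : Orthonormal 𝕜 e)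
    {k : Fin n → ℝ} (hk : ∀ i, 0 ≤ k i)
    (h : ∀ i, ∀ᵐ t ∂(volume.restrict (Set.Icc a b)),
      k i * ‖f t‖ ≤ RCLike.re (inner 𝕜 (f t) (e i) : 𝕜)) :
    Real.sqrt (∑ i, (k i) ^ 2) * ∫ t in Set.Icc a b, ‖f t‖ ≤
      ‖∫ t in Set.Icc a b, f t‖ := by
  set N := ∫ t in Set.Icc a b, ‖f t‖
  have hN : 0 ≤ N := integral_nonneg fun t => norm_nonneg _
  have hsqrt : Real.sqrt (∑ i, k i ^ 2) * N = Real.sqrt (∑ i, (k i * N) ^ 2) := by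
    simp_rw [mul_pow, ← Finset.sum_mul]
    rw [Real.sqrt_mul' _ (sq_nonneg N), Real.sqrt_sq hN]
  rw [hsqrt]
  exact he.sqrt_sum_sq_le_norm (fun i => mul_nonneg (hk i) hN)
    fun i => mul_integral_norm_le_re_inner_integral hf (h i)

theorem stmt_8 {𝕜 H : Type*} [RCLike 𝕜] [NormedAddCommGroup H] [InnerProductSpace 𝕜 H]
    [NormedSpace ℝ H] [IsScalarTower ℝ 𝕜 H] [CompleteSpace H]
    {a b : ℝ} {f : ℝ → H} (hf : IntegrableOn f (Set.Icc a b))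
    {n : ℕ} {e : Fin n → H} (he : Orthonormal 𝕜 e)
    {k : Fin n → ℝ} (hk : ∀ i, 0 ≤ k i)
    (h : ∀ i, ∀ᵐ t ∂(volume.restrict (Set.Icc a b)),
      k i * ‖f t‖ ≤ RCLike.re (inner 𝕜 (f t) (e i) : 𝕜)) :
    Real.sqrt (∑ i, (k i) ^ 2) * ∫ t in Set.Icc a b, ‖f t‖ ≤
      ‖∫ t in Set.Icc a b, f t‖ :=
  stmt_8_general hf he hk h
end

section
/- Let {e₁, …, eₙ} be an orthonormal family in a Hilbert space H, ρᵢ ∈ (0,1) for each i, and f : [a,b] → H Bochner integrable with ‖f(t) − eᵢ‖ ≤ ρᵢ for each i ∈ {1,…,n} and a.e. t ∈ [a,b]. Then (n − ∑ᵢ₌₁ⁿ ρᵢ²)^{1/2} · ∫ₐᵇ ‖f(t)‖ dt ≤ ‖∫ₐᵇ f(t) dt‖. -/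
/-!
Expanding `‖f t - eᵢ‖² ≤ ρᵢ²` and applying AM-GM gives the pointwise bound
`√(1 - ρᵢ²) ‖f t‖ ≤ Re ⟪eᵢ, f t⟫`; integrating, `√(1 - ρᵢ²) ∫ ‖f‖ ≤ Re ⟪eᵢ, ∫ f⟫`.
Squaring and summing over `i`, Bessel's inequality bounds the right-hand sides by `‖∫ f‖²`.
-/

open MeasureTheory RCLike

open scoped InnerProductSpace

section

variable {𝕜 H : Type*} [RCLike 𝕜] [NormedAddCommGroup H] [InnerProductSpace 𝕜 H]

theorem sqrt_one_sub_sq_mul_norm_le_re_inner {x e : H} {ρ : ℝ} (he : ‖e‖ = 1) (hρ : ρ ^ 2 ≤ 1)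
    (hx : ‖x - e‖ ≤ ρ) : Real.sqrt (1 - ρ ^ 2) * ‖x‖ ≤ re ⟪e, x⟫_𝕜 := by
  have hsq : ‖x‖ ^ 2 - 2 * re ⟪x, e⟫_𝕜 + 1 ≤ ρ ^ 2 := by
    simpa only [norm_sub_sq (𝕜 := 𝕜), he, one_pow] using pow_le_pow_left₀ (norm_nonneg _) hx 2
  have hamgm : 2 * Real.sqrt (1 - ρ ^ 2) * ‖x‖ ≤ (1 - ρ ^ 2) + ‖x‖ ^ 2 := by
    have := two_mul_le_add_sq (Real.sqrt (1 - ρ ^ 2)) ‖x‖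
    rwa [Real.sq_sqrt (sub_nonneg.2 hρ)] at this
  rw [← inner_re_symm]
  linarith

theorem Orthonormal.sqrt_sum_sq_mul_le_norm {ι : Type*} [Fintype ι] {e : ι → H}
    (he : Orthonormal 𝕜 e) {y : H} {c : ι → ℝ} {r : ℝ} (hc : ∀ i, 0 ≤ c i) (hr : 0 ≤ r)
    (hy : ∀ i, c i * r ≤ re ⟪e i, y⟫_𝕜) : Real.sqrt (∑ i, c i ^ 2) * r ≤ ‖y‖ := by
  have hsq : (∑ i, c i ^ 2) * r ^ 2 ≤ ‖y‖ ^ 2 := by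
    calc (∑ i, c i ^ 2) * r ^ 2 = ∑ i, (c i * r) ^ 2 := by
          simp only [Finset.sum_mul, mul_pow]
      _ ≤ ∑ i, ‖⟪e i, y⟫_𝕜‖ ^ 2 := by
          gcongr with i
          · exact mul_nonneg (hc i) hr
          · exact (hy i).trans (re_le_norm _)
      _ ≤ ‖y‖ ^ 2 := he.sum_inner_products_le y
  calc Real.sqrt (∑ i, c i ^ 2) * r = Real.sqrt ((∑ i, c i ^ 2) * r ^ 2) := by
        rw [Real.sqrt_mul' _ (sq_nonneg r), Real.sqrt_sq hr]
    _ ≤ Real.sqrt (‖y‖ ^ 2) := Real.sqrt_le_sqrt hsq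
    _ = ‖y‖ := Real.sqrt_sq (norm_nonneg y)

variable [NormedSpace ℝ H] [CompleteSpace H] {α : Type*}
  [MeasurableSpace α] {μ : Measure α}

theorem mul_integral_norm_le_re_inner_integral_s9 {f : α → H} (hf : Integrable f μ) {e : H} {c : ℝ}
    (hc : ∀ᵐ t ∂μ, c * ‖f t‖ ≤ re ⟪e, f t⟫_𝕜) :
    c * ∫ t, ‖f t‖ ∂μ ≤ re ⟪e, ∫ t, f t ∂μ⟫_𝕜 := by
  rw [← integral_inner hf, ← integral_re (hf.const_inner e), ← integral_const_mul]
  exact integral_mono_ae (hf.norm.const_mul c) (hf.const_inner e).re hc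

end

theorem stmt_9_general {𝕜 H : Type*} [RCLike 𝕜] [NormedAddCommGroup H] [InnerProductSpace 𝕜 H]
    [NormedSpace ℝ H] [CompleteSpace H]
    {a b : ℝ} {f : ℝ → H} (hf : IntegrableOn f (Set.Icc a b))
    {n : ℕ} {e : Fin n → H} (he : Orthonormal 𝕜 e)
    {ρ : Fin n → ℝ} (hρ : ∀ i, ρ i ∈ Set.Ioo (0 : ℝ) 1)
    (h : ∀ i, ∀ᵐ t ∂(volume.restrict (Set.Icc a b)), ‖f t - e i‖ ≤ ρ i) :
    Real.sqrt ((n : ℝ) - ∑ i, (ρ i) ^ 2) * ∫ t in Set.Icc a b, ‖f t‖ ≤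
      ‖∫ t in Set.Icc a b, f t‖ := by
  have hρ_sq : ∀ i, ρ i ^ 2 ≤ 1 := fun i => pow_le_one₀ (hρ i).1.le (hρ i).2.le
  have hsum : (n : ℝ) - ∑ i, ρ i ^ 2 = ∑ i, Real.sqrt (1 - ρ i ^ 2) ^ 2 := by
    simp [Real.sq_sqrt, sub_nonneg, hρ_sq, Finset.sum_sub_distrib]
  rw [hsum]
  refine he.sqrt_sum_sq_mul_le_norm (fun i => Real.sqrt_nonneg _)
    (integral_nonneg fun t => norm_nonneg _) fun i => ?_
  refine mul_integral_norm_le_re_inner_integral_s9 hf ?_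
  filter_upwards [h i] with t ht
  exact sqrt_one_sub_sq_mul_norm_le_re_inner (he.1 i) (hρ_sq i) ht

theorem stmt_9 {𝕜 H : Type*} [RCLike 𝕜] [NormedAddCommGroup H] [InnerProductSpace 𝕜 H]
    [NormedSpace ℝ H] [IsScalarTower ℝ 𝕜 H] [CompleteSpace H]
    {a b : ℝ} {f : ℝ → H} (hf : IntegrableOn f (Set.Icc a b))
    {n : ℕ} {e : Fin n → H} (he : Orthonormal 𝕜 e)
    {ρ : Fin n → ℝ} (hρ : ∀ i, ρ i ∈ Set.Ioo (0 : ℝ) 1)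
    (h : ∀ i, ∀ᵐ t ∂(volume.restrict (Set.Icc a b)), ‖f t - e i‖ ≤ ρ i) :
    Real.sqrt ((n : ℝ) - ∑ i, (ρ i) ^ 2) * ∫ t in Set.Icc a b, ‖f t‖ ≤
      ‖∫ t in Set.Icc a b, f t‖ :=
  stmt_9_general hf he hρ h
end

section
/- Let f : [a,b] → ℂ be Lebesgue integrable, α, β ∈ ℝ with α² + β² = 1, and K ≥ 1 such that |f(t)| ≤ K(α · Re f(t) + β · Im f(t)) for a.e. t ∈ [a,b]. Then ∫ₐᵇ |f(t)| dt ≤ K |∫ₐᵇ f(t) dt|. -/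
open MeasureTheory

open scoped RealInnerProductSpace

/-- Integrating `‖f‖ ≤ K ⟪u, f⟫` turns the right side into `K ⟪u, ∫ f⟫`, which Cauchy–Schwarz
bounds by `K ‖∫ f‖`. -/
theorem integral_norm_le_mul_norm_integral_of_norm_le_inner {X E : Type*} [MeasurableSpace X]
    {μ : Measure X} [NormedAddCommGroup E] [InnerProductSpace ℝ E] [CompleteSpace E]
    {f : X → E} (hf : Integrable f μ) {u : E} (hu : ‖u‖ ≤ 1) {K : ℝ} (hK : 0 ≤ K)
    (h : ∀ᵐ x ∂μ, ‖f x‖ ≤ K * ⟪u, f x⟫) :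
    ∫ x, ‖f x‖ ∂μ ≤ K * ‖∫ x, f x ∂μ‖ :=
  calc ∫ x, ‖f x‖ ∂μ ≤ ∫ x, K * ⟪u, f x⟫ ∂μ :=
        integral_mono_ae hf.norm ((hf.const_inner u).const_mul K) h
    _ = K * ⟪u, ∫ x, f x ∂μ⟫ := by rw [integral_const_mul, integral_inner hf]
    _ ≤ K * (‖u‖ * ‖∫ x, f x ∂μ‖) := by gcongr; exact real_inner_le_norm _ _
    _ ≤ K * ‖∫ x, f x ∂μ‖ := by
        gcongr; exact mul_le_of_le_one_left (norm_nonneg _) hu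

theorem Complex.real_inner_mk (α β : ℝ) (z : ℂ) : ⟪(⟨α, β⟩ : ℂ), z⟫ = α * z.re + β * z.im := by
  rw [Complex.inner]; simp only [Complex.mul_re, Complex.conj_re, Complex.conj_im]; ring

theorem Complex.norm_mk_eq_one {α β : ℝ} (hαβ : α ^ 2 + β ^ 2 = 1) : ‖(⟨α, β⟩ : ℂ)‖ = 1 := by
  rw [Complex.norm_def, Complex.normSq_mk, ← sq, ← sq, hαβ, Real.sqrt_one]

theorem stmt_11 {a b : ℝ} {f : ℝ → ℂ} (hf : IntegrableOn f (Set.Icc a b))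
    {α β : ℝ} (hαβ : α ^ 2 + β ^ 2 = 1) {K : ℝ} (hK : 1 ≤ K)
    (h : ∀ᵐ t ∂(volume.restrict (Set.Icc a b)),
      ‖f t‖ ≤ K * (α * (f t).re + β * (f t).im)) :
    ∫ t in Set.Icc a b, ‖f t‖ ≤ K * ‖∫ t in Set.Icc a b, f t‖ := by
  refine integral_norm_le_mul_norm_integral_of_norm_le_inner hf
    (Complex.norm_mk_eq_one hαβ).le (zero_le_one.trans hK) ?_
  simpa only [Complex.real_inner_mk] using h
end

section
/- Let f : [a,b] → ℂ be Lebesgue integrable with Re f(t) > 0 and |Im f(t)| ≤ (tan θ) · Re f(t) for a.e. t ∈ [a,b], where θ ∈ (0, π/2). Then cos θ · ∫ₐᵇ |f(t)| dt ≤ |∫ₐᵇ f(t) dt| (Karamata's inequality). -/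
open MeasureTheory

/-- `cos θ * ‖z‖ ≤ re z` squared reads `cos² θ * (re² + im²) ≤ re²`, i.e. `(cos θ * im)² ≤ (sin θ * re)²`. -/
lemma Complex.cos_mul_norm_le_re {θ : ℝ} (hc : 0 < Real.cos θ) {z : ℂ} (hre : 0 ≤ z.re)
    (him : |z.im| ≤ Real.tan θ * z.re) :
    Real.cos θ * ‖z‖ ≤ z.re := by
  have hsin : Real.cos θ * |z.im| ≤ Real.sin θ * z.re := by
    calc Real.cos θ * |z.im| ≤ Real.cos θ * (Real.tan θ * z.re) :=
          mul_le_mul_of_nonneg_left him hc.le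
      _ = Real.sin θ * z.re := by rw [← mul_assoc, mul_comm _ (Real.tan θ),
          Real.tan_mul_cos hc.ne']
  have hsq : (Real.cos θ * ‖z‖) ^ 2 ≤ z.re ^ 2 := by
    have hcos_im : (Real.cos θ * z.im) ^ 2 ≤ (Real.sin θ * z.re) ^ 2 := by
      rw [← sq_abs (_ * z.im), abs_mul, abs_of_pos hc]
      exact pow_le_pow_left₀ (by positivity) hsin 2
    calc (Real.cos θ * ‖z‖) ^ 2
        = (Real.cos θ * z.re) ^ 2 + (Real.cos θ * z.im) ^ 2 := by
          rw [mul_pow, Complex.sq_norm, Complex.normSq_apply]; ring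
      _ ≤ (Real.cos θ ^ 2 + Real.sin θ ^ 2) * z.re ^ 2 := by nlinarith
      _ = z.re ^ 2 := by rw [Real.cos_sq_add_sin_sq, one_mul]
  exact (pow_le_pow_iff_left₀ (by positivity) hre two_ne_zero).mp hsq

lemma cos_mul_integral_norm_le_norm_integral {α : Type*} [MeasurableSpace α] {μ : Measure α}
    {f : α → ℂ} (hf : Integrable f μ) {θ : ℝ} (hc : 0 < Real.cos θ)
    (h : ∀ᵐ t ∂μ, 0 ≤ (f t).re ∧ |(f t).im| ≤ Real.tan θ * (f t).re) :
    Real.cos θ * ∫ t, ‖f t‖ ∂μ ≤ ‖∫ t, f t ∂μ‖ :=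
  calc Real.cos θ * ∫ t, ‖f t‖ ∂μ = ∫ t, Real.cos θ * ‖f t‖ ∂μ := (integral_const_mul _ _).symm
    _ ≤ ∫ t, (f t).re ∂μ := by
        refine integral_mono_ae (hf.norm.const_mul _) hf.re ?_
        filter_upwards [h] with t ht
        exact Complex.cos_mul_norm_le_re hc ht.1 ht.2
    _ = (∫ t, f t ∂μ).re := integral_re hf
    _ ≤ ‖∫ t, f t ∂μ‖ := Complex.re_le_norm _

theorem stmt_12 {a b : ℝ} {f : ℝ → ℂ} (hf : IntegrableOn f (Set.Icc a b))
    {θ : ℝ} (hθ : θ ∈ Set.Ioo 0 (Real.pi / 2))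
    (h : ∀ᵐ t ∂(volume.restrict (Set.Icc a b)),
      0 < (f t).re ∧ |(f t).im| ≤ Real.tan θ * (f t).re) :
    Real.cos θ * ∫ t in Set.Icc a b, ‖f t‖ ≤
      ‖∫ t in Set.Icc a b, f t‖ := by
  have hc : 0 < Real.cos θ :=
    Real.cos_pos_of_mem_Ioo ⟨by linarith [hθ.1, Real.pi_pos], hθ.2⟩
  exact cos_mul_integral_norm_le_norm_integral hf hc (h.mono fun t ht => ⟨ht.1.le, ht.2⟩)
end

section
/- Let e = α + iβ ∈ ℂ with α² + β² = 1, r ∈ (0,1), and f : [a,b] → ℂ Lebesgue integrable with |f(t) − e| ≤ r for a.e. t ∈ [a,b]. Then √(1 − r²) · ∫ₐᵇ |f(t)| dt ≤ |∫ₐᵇ f(t) dt|. -/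
/-!
Test against the unit vector `e` (for `ℂ`, rotate `e` to `1`): if `‖x - e‖ ≤ r` then
`2⟪e, x⟫ ≥ ‖x‖² + (1 - r²) ≥ 2 √(1 - r²) ‖x‖`
by AM-GM. Integrating this pointwise bound and using `⟪e, ∫ f⟫ ≤ ‖∫ f‖` gives the claim.
-/

open MeasureTheory

section InnerProductSpace

variable {E : Type*} [NormedAddCommGroup E] [InnerProductSpace ℝ E]

theorem sqrt_one_sub_sq_mul_norm_le_inner {e x : E} (he : ‖e‖ = 1) {r : ℝ} (hr : r ≤ 1)
    (hx : ‖x - e‖ ≤ r) : √(1 - r ^ 2) * ‖x‖ ≤ inner ℝ e x := by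
  have hr₀ : 0 ≤ r := (norm_nonneg _).trans hx
  have hc : √(1 - r ^ 2) ^ 2 = 1 - r ^ 2 := Real.sq_sqrt (by nlinarith)
  have hdist : ‖x‖ ^ 2 - 2 * inner ℝ e x + 1 ≤ r ^ 2 := by
    have := norm_sub_sq_real x e
    rw [he, real_inner_comm] at this
    nlinarith [norm_nonneg (x - e)]
  nlinarith [sq_nonneg (‖x‖ - √(1 - r ^ 2))]

theorem sqrt_one_sub_sq_mul_integral_norm_le_norm_integral [CompleteSpace E]
    {Ω : Type*} [MeasurableSpace Ω] {μ : Measure Ω} {f : Ω → E} (hf : Integrable f μ)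
    {e : E} (he : ‖e‖ = 1) {r : ℝ} (hr : r ≤ 1) (h : ∀ᵐ t ∂μ, ‖f t - e‖ ≤ r) :
    √(1 - r ^ 2) * ∫ t, ‖f t‖ ∂μ ≤ ‖∫ t, f t ∂μ‖ :=
  calc √(1 - r ^ 2) * ∫ t, ‖f t‖ ∂μ = ∫ t, √(1 - r ^ 2) * ‖f t‖ ∂μ :=
        (integral_const_mul _ _).symm
    _ ≤ ∫ t, inner ℝ e (f t) ∂μ :=
        integral_mono_ae (hf.norm.const_mul _) (hf.const_inner e)
          (h.mono fun _ ht ↦ sqrt_one_sub_sq_mul_norm_le_inner he hr ht)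
    _ = inner ℝ e (∫ t, f t ∂μ) := integral_inner hf e
    _ ≤ ‖∫ t, f t ∂μ‖ := by
        simpa [he] using real_inner_le_norm e (∫ t, f t ∂μ)

end InnerProductSpace

theorem stmt_13 {a b : ℝ} {f : ℝ → ℂ} (hf : IntegrableOn f (Set.Icc a b))
    {α β : ℝ} (hαβ : α ^ 2 + β ^ 2 = 1) {r : ℝ} (hr : r ∈ Set.Ioo (0 : ℝ) 1)
    (h : ∀ᵐ t ∂(volume.restrict (Set.Icc a b)),
      ‖f t - (α + β * Complex.I)‖ ≤ r) :
    Real.sqrt (1 - r ^ 2) * ∫ t in Set.Icc a b, ‖f t‖ ≤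
      ‖∫ t in Set.Icc a b, f t‖ := by
  have he : ‖(α + β * Complex.I : ℂ)‖ = 1 := by
    rw [Complex.norm_add_mul_I, hαβ, Real.sqrt_one]
  exact sqrt_one_sub_sq_mul_integral_norm_le_norm_integral hf he hr.2.le h
end

section
/- Let e ∈ ℂ with |e| = 1 and M ≥ m > 0. If f : [a,b] → ℂ is Lebesgue integrable with Re[(M e − f(t))(conj(f(t)) − m · conj(e))] ≥ 0 for a.e. t ∈ [a,b], then (2√(mM)/(M+m)) · ∫ₐᵇ |f(t)| dt ≤ |∫ₐᵇ f(t) dt|. -/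
/-!
Expanding the hypothesis gives, pointwise, `(M + m) Re(ē f) ≥ ‖f‖² + mM ≥ 2 √(mM) ‖f‖`
(AM-GM). Integrating, `2 √(mM) ∫ ‖f‖ ≤ (M + m) Re(ē ∫ f) ≤ (M + m) ‖∫ f‖`.
-/

open MeasureTheory ComplexConjugate

namespace Complex

lemma re_mul_sub_mul_conj_sub (e z : ℂ) (he : ‖e‖ = 1) (m M : ℝ) :
    ((M * e - z) * (conj z - m * conj e)).re = (M + m) * (conj e * z).re - M * m - ‖z‖ ^ 2 := by
  have he2 : e.re * e.re + e.im * e.im = 1 := by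
    rw [← normSq_apply, ← Complex.sq_norm, he, one_pow]
  rw [Complex.sq_norm, normSq_apply]
  simp only [mul_re, mul_im, sub_re, sub_im, conj_re, conj_im, ofReal_re, ofReal_im]
  linear_combination (-M * m) * he2

lemma two_mul_sqrt_mul_norm_le_of_re_nonneg {e z : ℂ} (he : ‖e‖ = 1) {m M : ℝ}
    (hmM : 0 ≤ m * M) (h : 0 ≤ ((M * e - z) * (conj z - m * conj e)).re) :
    2 * Real.sqrt (m * M) * ‖z‖ ≤ (M + m) * (conj e * z).re := by
  rw [re_mul_sub_mul_conj_sub e z he] at h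
  have hs := Real.sq_sqrt hmM
  nlinarith [sq_nonneg (Real.sqrt (m * M) - ‖z‖)]

end Complex

lemma mul_integral_norm_le_norm_integral_of_ae_le_re {α : Type*} [MeasurableSpace α]
    {μ : Measure α} {f : α → ℂ} (hf : Integrable f μ) {e : ℂ} (he : ‖e‖ ≤ 1) {k : ℝ}
    (hk : ∀ᵐ t ∂μ, k * ‖f t‖ ≤ (conj e * f t).re) :
    k * ∫ t, ‖f t‖ ∂μ ≤ ‖∫ t, f t ∂μ‖ :=
  calc k * ∫ t, ‖f t‖ ∂μ = ∫ t, k * ‖f t‖ ∂μ := (integral_const_mul _ _).symm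
    _ ≤ ∫ t, (conj e * f t).re ∂μ := integral_mono_ae (hf.norm.const_mul k) (hf.const_mul _).re hk
    _ = (conj e * ∫ t, f t ∂μ).re := by rw [← integral_const_mul]; exact integral_re (hf.const_mul _)
    _ ≤ ‖conj e * ∫ t, f t ∂μ‖ := Complex.re_le_norm _
    _ ≤ ‖∫ t, f t ∂μ‖ := by
      rw [norm_mul, Complex.norm_conj]; exact mul_le_of_le_one_left (norm_nonneg _) he

theorem stmt_14 {a b : ℝ} {f : ℝ → ℂ} (hf : IntegrableOn f (Set.Icc a b))
    {e : ℂ} (he : ‖e‖ = 1) {m M : ℝ} (hm : 0 < m) (hmM : m ≤ M)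
    (h : ∀ᵐ t ∂(volume.restrict (Set.Icc a b)),
      0 ≤ ((M * e - f t) * (starRingEnd ℂ (f t) - m * starRingEnd ℂ e)).re) :
    (2 * Real.sqrt (m * M) / (M + m)) * ∫ t in Set.Icc a b, ‖f t‖ ≤
      ‖∫ t in Set.Icc a b, f t‖ := by
  have hMm : 0 < M + m := by linarith
  have hmM' : 0 ≤ m * M := by nlinarith
  refine mul_integral_norm_le_norm_integral_of_ae_le_re hf he.le ?_
  filter_upwards [h] with t ht
  rw [div_mul_eq_mul_div, div_le_iff₀ hMm, mul_comm _ (M + m)]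
  exact Complex.two_mul_sqrt_mul_norm_le_of_re_nonneg he hmM' ht
end

section
/- Let H be a Hilbert space, x₁, …, xₙ ∈ H nonzero vectors, a ∈ H a unit vector, and r ≥ 0 with r‖xᵢ‖ ≤ Re⟨xᵢ, a⟩ for all i ∈ {1, …, n}. Then r · ∑ᵢ₌₁ⁿ ‖xᵢ‖ ≤ ‖∑ᵢ₌₁ⁿ xᵢ‖ (Diaz–Metcalf inequality). -/
open Finset

theorem mul_sum_norm_le_norm_sum_mul_norm_of_le_re_inner {𝕜 H ι : Type*} [RCLike 𝕜]
    [NormedAddCommGroup H] [InnerProductSpace 𝕜 H] {s : Finset ι} {x : ι → H} {A : H} {r : ℝ}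
    (h : ∀ i ∈ s, r * ‖x i‖ ≤ RCLike.re (inner 𝕜 (x i) A : 𝕜)) :
    r * ∑ i ∈ s, ‖x i‖ ≤ ‖∑ i ∈ s, x i‖ * ‖A‖ :=
  calc r * ∑ i ∈ s, ‖x i‖ = ∑ i ∈ s, r * ‖x i‖ := mul_sum _ _ _
    _ ≤ ∑ i ∈ s, RCLike.re (inner 𝕜 (x i) A : 𝕜) := sum_le_sum h
    _ = RCLike.re (inner 𝕜 (∑ i ∈ s, x i) A : 𝕜) := by rw [sum_inner, map_sum]
    _ ≤ ‖∑ i ∈ s, x i‖ * ‖A‖ := re_inner_le_norm _ _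

theorem stmt_17_general {𝕜 H : Type*} [RCLike 𝕜] [NormedAddCommGroup H] [InnerProductSpace 𝕜 H]
    {n : ℕ} {x : Fin n → H} {A : H} (hA : ‖A‖ = 1)
    {r : ℝ} (h : ∀ i, r * ‖x i‖ ≤ RCLike.re (inner 𝕜 (x i) A : 𝕜)) :
    r * ∑ i, ‖x i‖ ≤ ‖∑ i, x i‖ := by
  simpa [hA] using mul_sum_norm_le_norm_sum_mul_norm_of_le_re_inner (s := univ) fun i _ ↦ h i

theorem stmt_17 {𝕜 H : Type*} [RCLike 𝕜] [NormedAddCommGroup H] [InnerProductSpace 𝕜 H]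
    {n : ℕ} {x : Fin n → H} (hx : ∀ i, x i ≠ 0) {A : H} (hA : ‖A‖ = 1)
    {r : ℝ} (hr : 0 ≤ r) (h : ∀ i, r * ‖x i‖ ≤ RCLike.re (inner 𝕜 (x i) A : 𝕜)) :
    r * ∑ i, ‖x i‖ ≤ ‖∑ i, x i‖ :=
  stmt_17_general hA h
end

section
/- Let H be a Hilbert space, x₁, …, xₙ ∈ H, a ∈ H with ‖a‖ = 1, and r ≥ 0 with r‖xᵢ‖ ≤ Re⟨xᵢ, a⟩ for all i. Then equality r ∑ᵢ ‖xᵢ‖ = ‖∑ᵢ xᵢ‖ holds if and only if ∑ᵢ₌₁ⁿ xᵢ = r (∑ᵢ₌₁ⁿ ‖xᵢ‖) a. -/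
/-!
Summing the hypotheses gives `r ∑ ‖xᵢ‖ ≤ Re ⟪∑ xᵢ, a⟫ ≤ ‖∑ xᵢ‖`. Under equality the vector
`s = ∑ xᵢ` satisfies `‖s‖ ≤ Re ⟪s, a⟫`, and then `‖s - ‖s‖ a‖² = 2‖s‖ (‖s‖ - Re ⟪s, a⟫) ≤ 0`
forces `s = ‖s‖ a`. Conversely, `‖(r ∑ ‖xᵢ‖) a‖ = r ∑ ‖xᵢ‖` because `r ≥ 0` and `‖a‖ = 1`.
-/

open RCLike

section

variable {𝕜 H : Type*} [RCLike 𝕜] [NormedAddCommGroup H] [InnerProductSpace 𝕜 H]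

theorem eq_norm_smul_of_norm_le_re_inner_s18 {s a : H} (ha : ‖a‖ = 1)
    (hs : ‖s‖ ≤ re (inner 𝕜 s a)) : s = (‖s‖ : 𝕜) • a := by
  have hsq : ‖s - (‖s‖ : 𝕜) • a‖ ^ 2 = 2 * ‖s‖ * (‖s‖ - re (inner 𝕜 s a)) := by
    rw [norm_sub_sq (𝕜 := 𝕜), inner_smul_right, re_ofReal_mul, norm_smul, norm_ofReal,
      abs_norm, ha]
    ring
  have hle : ‖s - (‖s‖ : 𝕜) • a‖ ^ 2 ≤ 0 := by
    rw [hsq]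
    exact mul_nonpos_of_nonneg_of_nonpos (by positivity) (by linarith)
  have hzero : ‖s - (‖s‖ : 𝕜) • a‖ ^ 2 = 0 := le_antisymm hle (sq_nonneg _)
  rwa [sq_eq_zero_iff, norm_eq_zero, sub_eq_zero] at hzero

theorem mul_sum_norm_le_re_inner_sum {ι : Type*} [Fintype ι] {x : ι → H} {a : H} {r : ℝ}
    (h : ∀ i, r * ‖x i‖ ≤ re (inner 𝕜 (x i) a)) :
    r * ∑ i, ‖x i‖ ≤ re (inner 𝕜 (∑ i, x i) a) := by
  rw [sum_inner, map_sum, Finset.mul_sum]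
  exact Finset.sum_le_sum fun i _ => h i

end

theorem stmt_18 {𝕜 H : Type*} [RCLike 𝕜] [NormedAddCommGroup H] [InnerProductSpace 𝕜 H]
    {n : ℕ} {x : Fin n → H} {A : H} (hA : ‖A‖ = 1)
    {r : ℝ} (hr : 0 ≤ r) (h : ∀ i, r * ‖x i‖ ≤ RCLike.re (inner 𝕜 (x i) A : 𝕜)) :
    r * ∑ i, ‖x i‖ = ‖∑ i, x i‖ ↔ ∑ i, x i = ((r * ∑ i, ‖x i‖ : ℝ) : 𝕜) • A := by
  constructor
  · intro heq
    have hle := mul_sum_norm_le_re_inner_sum h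
    rw [heq] at hle ⊢
    exact eq_norm_smul_of_norm_le_re_inner_s18 hA hle
  · intro heq
    have hnonneg : 0 ≤ r * ∑ i, ‖x i‖ := mul_nonneg hr (by positivity)
    rw [heq, norm_smul, norm_ofReal, abs_of_nonneg hnonneg, hA, mul_one]
end
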